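/- Let n ≥ 2 and m ≥ 1. Define F : Finset (Fin (n-1)) → ℤ by F(E) = 2*m*|E|*(n-|E|) (subsets of an (n-1)-element index set inside an n-element set). Then the number of subsets E with F(E) = 2*m*⌊n/2⌋*⌈n/2⌉ equals (n-1 choose ⌊n/2⌋) + (n-1 choose ⌈n/2⌉) if n is odd, and (n-1 choose n/2) if n is even. -/
import Mathlib

lemma stmt19_count (N k : ℕ) :
    ((Finset.univ : Finset (Finset (Fin N))).filter (fun E => E.card = k)).card
      = Nat.choose N k := by
  have : (Finset.univ : Finset (Finset (Fin N))).filter (fun E => E.card = k)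
      = Finset.powersetCard k Finset.univ := by
    rw [Finset.powersetCard_eq_filter, Finset.powerset_univ]
  rw [this, Finset.card_powersetCard, Finset.card_univ, Fintype.card_fin]

theorem stmt_19 (n m : ℕ) (hn : 2 ≤ n) (hm : 1 ≤ m) :
    ((Finset.univ : Finset (Finset (Fin (n - 1)))).filter
        (fun E => 2 * (m : ℤ) * E.card * ((n : ℤ) - E.card)
          = 2 * (m : ℤ) * ((n / 2 : ℕ) : ℤ) * (((n + 1) / 2 : ℕ) : ℤ))).card
      = if n % 2 = 1 then Nat.choose (n - 1) (n / 2) + Nat.choose (n - 1) ((n + 1) / 2)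
        else Nat.choose (n - 1) (n / 2) := by
  set a : ℕ := n / 2 with ha
  set b : ℕ := (n + 1) / 2 with hb
  have hc : (a : ℤ) + (b : ℤ) = (n : ℤ) := by
    have : a + b = n := by omega
    exact_mod_cast this
  have hm2 : (2 * (m : ℤ)) ≠ 0 := by positivity
  have key : ∀ E : Finset (Fin (n - 1)),
      (2 * (m : ℤ) * E.card * ((n : ℤ) - E.card) = 2 * (m : ℤ) * (a : ℤ) * (b : ℤ))
      ↔ (E.card = a ∨ E.card = b) := by
    intro E
    constructor
    · intro h
      have h' : (E.card : ℤ) * ((n : ℤ) - E.card) = (a : ℤ) * (b : ℤ) := by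
        have h2 : 2 * (m : ℤ) * ((E.card : ℤ) * ((n : ℤ) - E.card))
            = 2 * (m : ℤ) * ((a : ℤ) * (b : ℤ)) := by linear_combination h
        exact mul_left_cancel₀ hm2 h2
      have hz : ((E.card : ℤ) - a) * ((E.card : ℤ) - b) = 0 := by
        linear_combination -h' - (E.card : ℤ) * hc
      rcases mul_eq_zero.mp hz with hz | hz
      · left; exact_mod_cast sub_eq_zero.mp hz
      · right; exact_mod_cast sub_eq_zero.mp hz
    · rintro (h | h) <;> rw [h]
      · linear_combination -2 * (m : ℤ) * (a : ℤ) * hc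
      · linear_combination -2 * (m : ℤ) * (b : ℤ) * hc
  have hfilt : ((Finset.univ : Finset (Finset (Fin (n - 1)))).filter
        (fun E => 2 * (m : ℤ) * E.card * ((n : ℤ) - E.card)
          = 2 * (m : ℤ) * (a : ℤ) * (b : ℤ)))
      = (Finset.univ : Finset (Finset (Fin (n - 1)))).filter
          (fun E => E.card = a ∨ E.card = b) := by
    apply Finset.filter_congr
    intro E _
    exact key E
  rw [hfilt]
  by_cases hpar : n % 2 = 1
  · have hne : a ≠ b := by omega
    rw [if_pos hpar, Finset.filter_or,
      Finset.card_union_of_disjoint, stmt19_count, stmt19_count]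
    rw [Finset.disjoint_left]
    intro E h1 h2
    simp only [Finset.mem_filter] at h1 h2
    exact hne (h1.2 ▸ h2.2)
  · have hab : a = b := by omega
    rw [if_neg hpar]
    have : (Finset.univ : Finset (Finset (Fin (n - 1)))).filter
        (fun E => E.card = a ∨ E.card = b)
      = (Finset.univ : Finset (Finset (Fin (n - 1)))).filter (fun E => E.card = a) := by
      apply Finset.filter_congr
      intro E _
      constructor
      · rintro (h | h); exact h; exact hab ▸ h
      · exact Or.inl
    rw [this, stmt19_count]
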